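/- Let L be a locally compact Hausdorff space and U ⊆ L × L an open extremally antisymmetric set. Then f ↦ f - Jf (where Jg(x,y) = g(y,x)) defines a linear isometry from C₀(U) onto the subspace of antisymmetric functions in C₀(U ∪ Uˢᶜ). -/

import Mathlib

open ZeroAtInfty

/-- The functions in `C₀(L × L)` with (closed) support contained in `V`. -/
def suppIn (L : Type*) [TopologicalSpace L] (V : Set (L × L)) :
    Submodule ℝ C₀(L × L, ℝ) where
  carrier := {f | tsupport ⇑f ⊆ V}
  add_mem' := by
    intro f g hf hg
    have h : tsupport ⇑(f + g) ⊆ tsupport ⇑f ∪ tsupport ⇑g := by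
      exact (tsupport_add (f := ⇑f) (g := ⇑g))
    exact h.trans (Set.union_subset hf hg)
  zero_mem' := by simp [tsupport]
  smul_mem' := by
    intro c f hf
    have h : tsupport ⇑(c • f) ⊆ tsupport ⇑f := by
      apply closure_mono
      intro x hx
      simp only [ZeroAtInftyContinuousMap.coe_smul, Pi.smul_apply,
        Function.mem_support] at hx ⊢
      intro h0
      exact hx (by simp [h0])
    exact h.trans hf

/-- The symmetric functions in `C₀(L × L)` with support contained in `V`. -/
def asymSuppIn (L : Type*) [TopologicalSpace L] (V : Set (L × L)) :
    Submodule ℝ C₀(L × L, ℝ) where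
  carrier := {f | tsupport ⇑f ⊆ V ∧ ∀ x y : L, f (x, y) = -f (y, x)}
  add_mem' := by
    intro f g hf hg
    have h : tsupport ⇑(f + g) ⊆ tsupport ⇑f ∪ tsupport ⇑g := by
      exact (tsupport_add (f := ⇑f) (g := ⇑g))
    exact ⟨h.trans (Set.union_subset hf.1 hg.1), fun x y => by
      simp [hf.2 x y, hg.2 x y]; ring⟩
  zero_mem' := by simp [tsupport]
  smul_mem' := by
    intro c f hf
    have h : tsupport ⇑(c • f) ⊆ tsupport ⇑f := by
      apply closure_mono
      intro x hx
      simp only [ZeroAtInftyContinuousMap.coe_smul, Pi.smul_apply,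
        Function.mem_support] at hx ⊢
      intro h0
      exact hx (by simp [h0])
    exact ⟨h.trans hf.1, fun x y => by simp [hf.2 x y]⟩

/-
Since `U ∩ Uˢᶜ = ∅`, a function `f` in `C₀(U)` vanishes at `p` or at `p.swap`, so `f - Jf` agrees
with `f` on `U` and with `-Jf` on `Uˢᶜ`; this gives the isometry. As `U` is open, it also misses the
closure of `Uˢᶜ`, so an antisymmetric `g` supported in `U ∪ Uˢᶜ` vanishes on the frontier of `U`.
Hence `g` cut off outside `U` is still continuous, lies in `C₀(U)`, and is mapped to `g`.
-/

namespace ZeroAtInftyContinuousMap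

variable {X E : Type*} [TopologicalSpace X] [NormedAddCommGroup E]

noncomputable def indicator (g : C₀(X, E)) (s : Set X) (hg : ∀ x ∈ frontier s, g x = 0) :
    C₀(X, E) where
  toFun := s.indicator g
  continuous_toFun := continuous_indicator hg g.continuous.continuousOn
  zero_at_infty' :=
    squeeze_zero_norm (norm_indicator_le_norm_self g) (by simpa using g.zero_at_infty'.norm)

@[simp]
lemma indicator_apply (g : C₀(X, E)) (s : Set X) (hg : ∀ x ∈ frontier s, g x = 0) (x : X) :
    g.indicator s hg x = s.indicator g x :=
  rfl

lemma tsupport_indicator_subset (g : C₀(X, E)) (s : Set X) (hg : ∀ x ∈ frontier s, g x = 0) :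
    tsupport (g.indicator s hg) ⊆ closure s ∩ tsupport g := by
  rw [tsupport, coe_mk, indicator, Set.support_indicator]
  exact closure_inter_subset

end ZeroAtInftyContinuousMap

lemma apply_swap_eq_zero_of_support_subset {α M : Type*} [Zero M] {U : Set (α × α)}
    (hanti : ∀ x y : α, (x, y) ∈ U → (y, x) ∉ U) {f : α × α → M}
    (hf : Function.support f ⊆ U) {p : α × α} (hp : f p ≠ 0) : f p.swap = 0 := by
  by_contra h
  exact hanti p.1 p.2 (hf hp) (hf h)

section Antisymmetrize

variable {L : Type*} [TopologicalSpace L] {U : Set (L × L)}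

noncomputable def antisymmetrize : C₀(L × L, ℝ) →ₗ[ℝ] C₀(L × L, ℝ) :=
  LinearMap.id - ZeroAtInftyContinuousMap.compLinearMap (Homeomorph.prodComm L L).toCocompactMap

lemma antisymmetrize_apply (f : C₀(L × L, ℝ)) (p : L × L) :
    antisymmetrize f p = f p - f p.swap :=
  rfl

lemma tsupport_antisymmetrize_subset (f : C₀(L × L, ℝ)) :
    tsupport (antisymmetrize f) ⊆ tsupport f ∪ Prod.swap '' tsupport f := by
  have hswap : tsupport (f ∘ Prod.swap) = Prod.swap '' tsupport f := by
    rw [Set.image_swap_eq_preimage_swap]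
    exact tsupport_comp_eq_preimage f (Homeomorph.prodComm L L)
  rw [← hswap]
  exact tsupport_sub f (f ∘ Prod.swap)

lemma antisymmetrize_mem_asymSuppIn {f : C₀(L × L, ℝ)} (hf : f ∈ suppIn L U) :
    antisymmetrize f ∈ asymSuppIn L (U ∪ Prod.swap '' U) := by
  refine ⟨(tsupport_antisymmetrize_subset f).trans
    (Set.union_subset_union hf (Set.image_mono hf)), fun x y => ?_⟩
  simp only [antisymmetrize_apply, Prod.swap_prod_mk, neg_sub]

lemma antisymmetrize_apply_of_ne_zero (hanti : ∀ x y : L, (x, y) ∈ U → (y, x) ∉ U)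
    {f : C₀(L × L, ℝ)} (hf : f ∈ suppIn L U) {p : L × L} (hp : f p ≠ 0) :
    antisymmetrize f p = f p := by
  rw [antisymmetrize_apply,
    apply_swap_eq_zero_of_support_subset hanti ((subset_tsupport f).trans hf) hp, sub_zero]

lemma norm_antisymmetrize (hanti : ∀ x y : L, (x, y) ∈ U → (y, x) ∉ U)
    {f : C₀(L × L, ℝ)} (hf : f ∈ suppIn L U) : ‖antisymmetrize f‖ = ‖f‖ := by
  simp only [← ZeroAtInftyContinuousMap.norm_toBCF_eq_norm]
  apply le_antisymm
  · refine (BoundedContinuousFunction.norm_le (norm_nonneg _)).2 fun p => ?_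
    rcases eq_or_ne (f p) 0 with hp | hp
    · have hfp : antisymmetrize f p = -f p.swap := by rw [antisymmetrize_apply, hp, zero_sub]
      rw [ZeroAtInftyContinuousMap.toBCF_apply, hfp, norm_neg]
      exact f.toBCF.norm_coe_le_norm p.swap
    · rw [ZeroAtInftyContinuousMap.toBCF_apply, antisymmetrize_apply_of_ne_zero hanti hf hp]
      exact f.toBCF.norm_coe_le_norm p
  · refine (BoundedContinuousFunction.norm_le (norm_nonneg _)).2 fun p => ?_
    rcases eq_or_ne (f p) 0 with hp | hp
    · rw [ZeroAtInftyContinuousMap.toBCF_apply, hp, norm_zero]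
      exact norm_nonneg _
    · rw [ZeroAtInftyContinuousMap.toBCF_apply, ← antisymmetrize_apply_of_ne_zero hanti hf hp]
      exact (antisymmetrize f).toBCF.norm_coe_le_norm p

lemma swap_notMem_of_mem_closure (hU : IsOpen U) (hanti : ∀ x y : L, (x, y) ∈ U → (y, x) ∉ U)
    {p : L × L} (hp : p ∈ closure U) : p.swap ∉ U := by
  intro hps
  obtain ⟨q, hqU, hqU'⟩ := mem_closure_iff.mp hp _ (hU.preimage continuous_swap) hps
  exact hanti q.1 q.2 hqU' hqU

lemma tsupport_inter_closure_subset (hU : IsOpen U) (hanti : ∀ x y : L, (x, y) ∈ U → (y, x) ∉ U)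
    {g : C₀(L × L, ℝ)} (hg : tsupport g ⊆ U ∪ Prod.swap '' U) :
    tsupport g ∩ closure U ⊆ U := by
  rintro p ⟨hpg, hpU⟩
  refine (hg hpg).resolve_right fun hps => swap_notMem_of_mem_closure hU hanti hpU ?_
  rwa [Set.image_swap_eq_preimage_swap] at hps

lemma apply_eq_zero_of_mem_frontier (hU : IsOpen U) (hanti : ∀ x y : L, (x, y) ∈ U → (y, x) ∉ U)
    {g : C₀(L × L, ℝ)} (hg : tsupport g ⊆ U ∪ Prod.swap '' U) :
    ∀ p ∈ frontier U, g p = 0 := by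
  intro p hp
  rw [hU.frontier_eq] at hp
  exact image_eq_zero_of_notMem_tsupport fun hpg =>
    hp.2 (tsupport_inter_closure_subset hU hanti hg ⟨hpg, hp.1⟩)

lemma exists_antisymmetrize_eq (hU : IsOpen U) (hanti : ∀ x y : L, (x, y) ∈ U → (y, x) ∉ U)
    {g : C₀(L × L, ℝ)} (hg : g ∈ asymSuppIn L (U ∪ Prod.swap '' U)) :
    ∃ f ∈ suppIn L U, antisymmetrize f = g := by
  obtain ⟨hgU, hg_anti⟩ := hg
  let f := g.indicator U (apply_eq_zero_of_mem_frontier hU hanti hgU)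
  refine ⟨f, ?_, ?_⟩
  · refine (ZeroAtInftyContinuousMap.tsupport_indicator_subset _ _ _).trans ?_
    rw [Set.inter_comm]
    exact tsupport_inter_closure_subset hU hanti hgU
  · ext p
    rw [antisymmetrize_apply, ZeroAtInftyContinuousMap.indicator_apply,
      ZeroAtInftyContinuousMap.indicator_apply]
    by_cases hp : p ∈ U
    · have hps : p.swap ∉ U := hanti p.1 p.2 hp
      rw [Set.indicator_of_mem hp, Set.indicator_of_notMem hps, sub_zero]
    by_cases hps : p.swap ∈ U
    · rw [Set.indicator_of_notMem hp, Set.indicator_of_mem hps, zero_sub]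
      exact (hg_anti p.1 p.2).symm
    · have hpg : p ∉ tsupport g := fun hpg => (hgU hpg).elim hp
        (by rwa [Set.image_swap_eq_preimage_swap])
      rw [Set.indicator_of_notMem hp, Set.indicator_of_notMem hps, sub_zero,
        image_eq_zero_of_notMem_tsupport hpg]

end Antisymmetrize

theorem stmt10_general {L : Type*} [TopologicalSpace L]
    (U : Set (L × L)) (hU : IsOpen U)
    (hanti : ∀ x y : L, (x, y) ∈ U → (y, x) ∉ U) :
    ∃ Φ : suppIn L U ≃ₗᵢ[ℝ] asymSuppIn L (U ∪ Prod.swap '' U),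
      ∀ (f : suppIn L U) (x y : L),
        (Φ f : C₀(L × L, ℝ)) (x, y)
          = (f : C₀(L × L, ℝ)) (x, y) - (f : C₀(L × L, ℝ)) (y, x) := by
  let T : suppIn L U →ₗᵢ[ℝ] asymSuppIn L (U ∪ Prod.swap '' U) :=
    { toLinearMap := (antisymmetrize.comp (suppIn L U).subtype).codRestrict _
        fun f => antisymmetrize_mem_asymSuppIn f.2
      norm_map' := fun f => norm_antisymmetrize hanti f.2 }
  have hT_surj : Function.Surjective T := by
    rintro ⟨g, hg⟩
    obtain ⟨f, hf, rfl⟩ := exists_antisymmetrize_eq hU hanti hg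
    exact ⟨⟨f, hf⟩, rfl⟩
  exact ⟨LinearIsometryEquiv.ofSurjective (F := suppIn L U) T hT_surj,
    fun f x y => antisymmetrize_apply f.1 (x, y)⟩

/-- If `U ⊆ L × L` is an open extremally antisymmetric set, then `f ↦ f - Jf`
(with `Jf(x,y) = f(y,x)`) is a linear isometry from `C₀(U)` onto the antisymmetric
functions in `C₀(U ∪ Uˢᶜ)`. -/
theorem stmt10 {L : Type*} [TopologicalSpace L] [LocallyCompactSpace L] [T2Space L]
    (U : Set (L × L)) (hU : IsOpen U)
    (hanti : ∀ x y : L, (x, y) ∈ U → (y, x) ∉ U) :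
    ∃ Φ : suppIn L U ≃ₗᵢ[ℝ] asymSuppIn L (U ∪ Prod.swap '' U),
      ∀ (f : suppIn L U) (x y : L),
        (Φ f : C₀(L × L, ℝ)) (x, y)
          = (f : C₀(L × L, ℝ)) (x, y) - (f : C₀(L × L, ℝ)) (y, x) :=
  stmt10_general U hU hanti
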